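/- For every prime power q ≥ 3, the graph Λ_{5,q} has girth at least 10; that is, Λ_{5,q} contains no cycle of length 8 (and no odd cycles, being bipartite). -/

import Mathlib

/-- Vertices of one side of the graph `Λ(k,q)`: tuples of `k+1` elements of `F`,
modelled as functions `ℕ → F` vanishing above index `k`. -/
abbrev PVec (F : Type*) [Zero F] (k : ℕ) : Type _ := {f : ℕ → F // ∀ i, k < i → f i = 0}

/-- Adjacency condition between a left vertex `[l]` (with `l 1 = l 2`) and a right
vertex `⟨r⟩` (with `r 1 = 0`) in `Λ(k,q)`: for `2 ≤ i ≤ k`,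
`l i + r i = r 0 * l (i-2)` if `i ≡ 2, 3 (mod 4)` and
`l i + r i = l 0 * r (i-2)` if `i ≡ 0, 1 (mod 4)`. -/
def lamAdjLR {F : Type*} [Field F] (k : ℕ) (l r : ℕ → F) : Prop :=
  l 1 = l 2 ∧ r 1 = 0 ∧ ∀ i, 2 ≤ i → i ≤ k →
    ((i % 4 = 2 ∨ i % 4 = 3) → l i + r i = r 0 * l (i - 2)) ∧
    ((i % 4 = 0 ∨ i % 4 = 1) → l i + r i = l 0 * r (i - 2))

/-- The bipartite graph `Λ(k,q)` (the graph `Λ_{k,q}` of the paper, isomorphic to `D(k,q)`). -/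
def LambdaGraph (F : Type*) [Field F] (k : ℕ) : SimpleGraph (PVec F k ⊕ PVec F k) where
  Adj x y := match x, y with
    | Sum.inl l, Sum.inr r => lamAdjLR k l.1 r.1
    | Sum.inr r, Sum.inl l => lamAdjLR k l.1 r.1
    | _, _ => False
  symm := ⟨by rintro (l | r) (l' | r') h <;> exact h⟩
  loopless := ⟨by rintro (l | r) h <;> exact h⟩

/-!
`Λ(5,q)` is bipartite, so only cycles of length 4, 6 and 8 have to be excluded. A 4-cycle
traversed twice, and a 6-cycle followed by a step back and forth, are closed walks
`L₁ R₁ L₂ R₂ L₃ R₃ L₄ R₄ L₁` with `L₁ ≠ L₂ ≠ L₃` and `R₁ ≠ R₂ ≠ R₃`, just like an 8-cycle.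
Two neighbours of a vertex are determined by their 0-th coordinates, so for `aᵢ = Lᵢ 0` and
`bᵢ = Rᵢ 0` we get `a₁ ≠ a₂ ≠ a₃` and `b₁ ≠ b₂ ≠ b₃`. Now compute `L₃` along `L₁ R₁ L₂ R₂ L₃` and
along `L₁ R₄ L₄ R₃ L₃`: coordinates 2, 4 and 5 give `(b₁ - b₄)(b₂ - b₁)(a₂ - a₁)(a₃ - a₂) = 0`,
so `b₄ = b₁`, and then coordinates 2 and 3 give `(b₂ - b₁)(b₂ - b₃)(a₃ - a₂) = 0`.
-/

open SimpleGraph Sum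

theorem PVec.ext_of_forall_le {F : Type*} [Zero F] {k : ℕ} {x y : PVec F k}
    (h : ∀ i ≤ k, x.1 i = y.1 i) : x = y :=
  Subtype.ext <| funext fun i =>
    if hi : i ≤ k then h i hi else by rw [x.2 i (by omega), y.2 i (by omega)]

theorem SimpleGraph.Walk.IsCycle.exists_length_eight {V : Type*} {G : SimpleGraph V} {u : V}
    {c : G.Walk u u} (hc : c.IsCycle) (hlen : c.length = 4 ∨ c.length = 6 ∨ c.length = 8) :
    ∃ w : G.Walk u u, w.length = 8 ∧ ∀ i < 4, w.getVert i ≠ w.getVert (i + 2) := by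
  have hnb (i : ℕ) (hi : i + 1 ≤ c.length) : c.getVert i ≠ c.getVert (i + 2) :=
    hc.getVert_sub_one_ne_getVert_add_one hi
  rcases hlen with h | h | h
  · refine ⟨c.append c, by simp [h], fun i hi => ?_⟩
    simp only [Walk.getVert_append, h]
    interval_cases i
    exacts [hnb 0 (by omega), hnb 1 (by omega), (hnb 0 (by omega)).symm, (hnb 1 (by omega)).symm]
  · have hadj := c.adj_snd hc.not_nil
    refine ⟨c.append (.cons hadj (.cons hadj.symm .nil)), by simp [h], fun i hi => ?_⟩
    simp only [Walk.getVert_append, h, show i < 6 by omega, show i + 2 < 6 by omega, if_true]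
    exact hnb i (by omega)
  · exact ⟨c, h, fun i hi => hnb i (by omega)⟩

section

variable {F : Type*} [Field F]

theorem lamAdjLR_five_iff {l r : ℕ → F} :
    lamAdjLR 5 l r ↔ l 1 = l 2 ∧ r 1 = 0 ∧ l 2 + r 2 = r 0 * l 0 ∧ l 3 + r 3 = r 0 * l 2 ∧
      l 4 + r 4 = l 0 * r 2 ∧ l 5 + r 5 = l 0 * r 3 := by
  constructor
  · rintro ⟨h1, h2, h⟩
    exact ⟨h1, h2, (h 2 le_rfl (by norm_num)).1 (by norm_num),
      h1 ▸ (h 3 (by norm_num) (by norm_num)).1 (by norm_num),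
      (h 4 (by norm_num) (by norm_num)).2 (by norm_num),
      (h 5 (by norm_num) le_rfl).2 (by norm_num)⟩
  · rintro ⟨h1, h2, h3, h4, h5, h6⟩
    refine ⟨h1, h2, fun i hi2 hi5 => ?_⟩
    interval_cases i <;> simp_all

namespace lamAdjLR

variable {l l' r r' : ℕ → F}

theorem left_step (h : lamAdjLR 5 l r) (h' : lamAdjLR 5 l' r) :
    l' 2 - l 2 = r 0 * (l' 0 - l 0) ∧ l' 3 - l 3 = r 0 * (l' 2 - l 2) ∧
      l' 4 - l 4 = r 2 * (l' 0 - l 0) ∧ l' 5 - l 5 = r 3 * (l' 0 - l 0) := by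
  obtain ⟨-, -, e2, e3, e4, e5⟩ := lamAdjLR_five_iff.1 h
  obtain ⟨-, -, e2', e3', e4', e5'⟩ := lamAdjLR_five_iff.1 h'
  exact ⟨by linear_combination e2' - e2, by linear_combination e3' - e3,
    by linear_combination e4' - e4, by linear_combination e5' - e5⟩

theorem right_step (h : lamAdjLR 5 l r) (h' : lamAdjLR 5 l r') :
    r' 2 - r 2 = l 0 * (r' 0 - r 0) ∧ r' 3 - r 3 = l 2 * (r' 0 - r 0) ∧
      r' 4 - r 4 = l 0 * (r' 2 - r 2) ∧ r' 5 - r 5 = l 0 * (r' 3 - r 3) := by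
  obtain ⟨-, -, e2, e3, e4, e5⟩ := lamAdjLR_five_iff.1 h
  obtain ⟨-, -, e2', e3', e4', e5'⟩ := lamAdjLR_five_iff.1 h'
  exact ⟨by linear_combination e2' - e2, by linear_combination e3' - e3,
    by linear_combination e4' - e4, by linear_combination e5' - e5⟩

theorem left_eq_of_coord_zero_eq {l l' : PVec F 5} (h : lamAdjLR 5 l.1 r) (h' : lamAdjLR 5 l'.1 r)
    (h0 : l.1 0 = l'.1 0) : l = l' := by
  obtain ⟨e2, e3, e4, e5⟩ := h.left_step h'
  have e1 := (lamAdjLR_five_iff.1 h).1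
  have e1' := (lamAdjLR_five_iff.1 h').1
  simp only [h0, sub_self, mul_zero, sub_eq_zero] at e2 e4 e5
  simp only [e2, sub_self, mul_zero, sub_eq_zero] at e3
  refine PVec.ext_of_forall_le fun i hi => ?_
  interval_cases i <;> simp_all

theorem right_eq_of_coord_zero_eq {r r' : PVec F 5} (h : lamAdjLR 5 l r.1) (h' : lamAdjLR 5 l r'.1)
    (h0 : r.1 0 = r'.1 0) : r = r' := by
  obtain ⟨e2, e3, e4, e5⟩ := h.right_step h'
  have e1 := (lamAdjLR_five_iff.1 h).2.1
  have e1' := (lamAdjLR_five_iff.1 h').2.1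
  simp only [h0, sub_self, mul_zero, sub_eq_zero] at e2 e3
  simp only [e2, e3, sub_self, mul_zero, sub_eq_zero] at e4 e5
  refine PVec.ext_of_forall_le fun i hi => ?_
  interval_cases i <;> simp_all

theorem false_of_eight_cycle {l₁ l₂ l₃ l₄ r₁ r₂ r₃ r₄ : ℕ → F}
    (h₁₁ : lamAdjLR 5 l₁ r₁) (h₂₁ : lamAdjLR 5 l₂ r₁) (h₂₂ : lamAdjLR 5 l₂ r₂)
    (h₃₂ : lamAdjLR 5 l₃ r₂) (h₃₃ : lamAdjLR 5 l₃ r₃) (h₄₃ : lamAdjLR 5 l₄ r₃)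
    (h₄₄ : lamAdjLR 5 l₄ r₄) (h₁₄ : lamAdjLR 5 l₁ r₄)
    (ha₁₂ : l₁ 0 ≠ l₂ 0) (ha₂₃ : l₂ 0 ≠ l₃ 0) (hb₁₂ : r₁ 0 ≠ r₂ 0) (hb₂₃ : r₂ 0 ≠ r₃ 0) :
    False := by
  obtain ⟨A₂, A₃, A₄, A₅⟩ := h₁₁.left_step h₂₁
  obtain ⟨B₂, B₃, B₄, B₅⟩ := h₂₂.left_step h₃₂
  obtain ⟨C₂, C₃, C₄, C₅⟩ := h₁₄.left_step h₄₄
  obtain ⟨D₂, D₃, D₄, D₅⟩ := h₄₃.left_step h₃₃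
  obtain ⟨P₂, P₃, -, -⟩ := h₂₁.right_step h₂₂
  obtain ⟨Q₂, Q₃, -, -⟩ := h₁₄.right_step h₁₁
  obtain ⟨S₂, S₃, -, -⟩ := h₄₃.right_step h₄₄
  set a₁ := l₁ 0
  set a₂ := l₂ 0
  set a₃ := l₃ 0
  set a₄ := l₄ 0
  set b₁ := r₁ 0
  set b₂ := r₂ 0
  set b₃ := r₃ 0
  set b₄ := r₄ 0
  -- `closeₖ`: coordinate `k` of `l₃`, reached along `l₁ r₁ l₂ r₂ l₃` and along `l₁ r₄ l₄ r₃ l₃`.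
  have close₂ : b₁ * (a₂ - a₁) + b₂ * (a₃ - a₂) = b₄ * (a₄ - a₁) + b₃ * (a₃ - a₄) := by
    linear_combination C₂ + D₂ - A₂ - B₂
  have close₃ : b₁ ^ 2 * (a₂ - a₁) + b₂ ^ 2 * (a₃ - a₂) =
      b₄ ^ 2 * (a₄ - a₁) + b₃ ^ 2 * (a₃ - a₄) := by
    linear_combination C₃ + b₄ * C₂ + D₃ + b₃ * D₂ - A₃ - b₁ * A₂ - B₃ - b₂ * B₂
  have close₄ : r₁ 2 * (a₂ - a₁) + r₂ 2 * (a₃ - a₂) = r₄ 2 * (a₄ - a₁) + r₃ 2 * (a₃ - a₄) := by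
    linear_combination C₄ + D₄ - A₄ - B₄
  have close₅ : r₁ 3 * (a₂ - a₁) + r₂ 3 * (a₃ - a₂) = r₄ 3 * (a₄ - a₁) + r₃ 3 * (a₃ - a₄) := by
    linear_combination C₅ + D₅ - A₅ - B₅
  have key₄ : (b₂ - b₁) * (a₂ - a₁) * (a₃ - a₂) = (b₃ - b₄) * (a₄ - a₁) * (a₃ - a₄) := by
    linear_combination close₄ - (a₃ - a₂) * P₂ - (a₃ - a₄) * S₂ - (a₃ - a₁) * Q₂ - a₁ * close₂
  have key₅ : b₁ * (b₂ - b₁) * (a₂ - a₁) * (a₃ - a₂) =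
      b₄ * (b₃ - b₄) * (a₄ - a₁) * (a₃ - a₄) := by
    linear_combination close₅ - (a₃ - a₂) * P₃ - (a₃ - a₄) * S₃ - (a₃ - a₁) * Q₃ - l₁ 2 * close₂
      - (b₂ - b₁) * (a₃ - a₂) * A₂ - (b₄ - b₃) * (a₃ - a₄) * C₂
  have hb₄ : b₄ = b₁ := by
    have h : (b₁ - b₄) * (b₁ - b₂) * (a₁ - a₂) * (a₂ - a₃) = 0 := by
      linear_combination b₄ * key₄ - key₅
    simp only [mul_eq_zero, sub_eq_zero] at h
    tauto
  rw [hb₄] at close₂ close₃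
  have h : (b₁ - b₂) * (b₂ - b₃) * (a₂ - a₃) = 0 := by
    linear_combination close₃ - (b₃ + b₁) * close₂
  simp only [mul_eq_zero, sub_eq_zero] at h
  tauto

end lamAdjLR

namespace LambdaGraph

variable {k : ℕ}

theorem adj_inl_iff {l : PVec F k} {y : PVec F k ⊕ PVec F k} :
    (LambdaGraph F k).Adj (inl l) y ↔ ∃ r, y = inr r ∧ lamAdjLR k l.1 r.1 := by
  rcases y with l' | r
  · exact iff_of_false (fun h => h) (by simp)
  · exact ⟨fun h => ⟨r, rfl, h⟩, fun ⟨_, hr, h⟩ => by obtain rfl := inr_injective hr; exact h⟩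

theorem adj_inr_iff {r : PVec F k} {y : PVec F k ⊕ PVec F k} :
    (LambdaGraph F k).Adj (inr r) y ↔ ∃ l, y = inl l ∧ lamAdjLR k l.1 r.1 := by
  rcases y with l | r'
  · exact ⟨fun h => ⟨l, rfl, h⟩, fun ⟨_, hl, h⟩ => by obtain rfl := inl_injective hl; exact h⟩
  · exact iff_of_false (fun h => h) (by simp)

def sideColoring (F : Type*) [Field F] (k : ℕ) : (LambdaGraph F k).Coloring Bool :=
  Coloring.mk isLeft <| by
    rintro (l | r) (l' | r') h
    all_goals first | exact (h : False).elim | simp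

theorem even_length {v : PVec F k ⊕ PVec F k} (c : (LambdaGraph F k).Walk v v) :
    Even c.length :=
  ((sideColoring F k).even_length_iff_congr c).2 Iff.rfl

theorem exists_isCycle_inl {v : PVec F k ⊕ PVec F k} {c : (LambdaGraph F k).Walk v v}
    (hc : c.IsCycle) :
    ∃ (l : PVec F k) (c' : (LambdaGraph F k).Walk (inl l) (inl l)),
      c'.IsCycle ∧ c'.length = c.length := by
  classical
  rcases v with l | r
  · exact ⟨l, c, hc, rfl⟩
  · obtain ⟨l, hl, -⟩ := adj_inr_iff.1 (c.adj_snd hc.not_nil)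
    have hmem : inl l ∈ c.support := hl ▸ c.getVert_mem_support 1
    exact ⟨l, c.rotate _ hmem, hc.rotate hmem, c.length_rotate _ hmem⟩

theorem false_of_walk_length_eight {l : PVec F 5} (w : (LambdaGraph F 5).Walk (inl l) (inl l))
    (hw : w.length = 8) (hnb : ∀ i < 4, w.getVert i ≠ w.getVert (i + 2)) : False := by
  have hadj (i : ℕ) (hi : i < 8) : (LambdaGraph F 5).Adj (w.getVert i) (w.getVert (i + 1)) :=
    w.adj_getVert_succ (by omega)
  have hv₀ : w.getVert 0 = inl l := w.getVert_zero
  have hv₈ : w.getVert 8 = inl l := hw ▸ w.getVert_length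
  obtain ⟨r₁, hv₁, h₁₁⟩ := adj_inl_iff.1 (hv₀ ▸ hadj 0 (by norm_num))
  obtain ⟨l₂, hv₂, h₂₁⟩ := adj_inr_iff.1 (hv₁ ▸ hadj 1 (by norm_num))
  obtain ⟨r₂, hv₃, h₂₂⟩ := adj_inl_iff.1 (hv₂ ▸ hadj 2 (by norm_num))
  obtain ⟨l₃, hv₄, h₃₂⟩ := adj_inr_iff.1 (hv₃ ▸ hadj 3 (by norm_num))
  obtain ⟨r₃, hv₅, h₃₃⟩ := adj_inl_iff.1 (hv₄ ▸ hadj 4 (by norm_num))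
  obtain ⟨l₄, hv₆, h₄₃⟩ := adj_inr_iff.1 (hv₅ ▸ hadj 5 (by norm_num))
  obtain ⟨r₄, hv₇, h₄₄⟩ := adj_inl_iff.1 (hv₆ ▸ hadj 6 (by norm_num))
  have h₁₄ : lamAdjLR 5 l.1 r₄.1 := by
    have h := hadj 7 (by norm_num)
    rw [hv₇, hv₈] at h
    exact h
  refine h₁₁.false_of_eight_cycle h₂₁ h₂₂ h₃₂ h₃₃ h₄₃ h₄₄ h₁₄ (fun h => ?_) (fun h => ?_)
    (fun h => ?_) (fun h => ?_)
  · exact hnb 0 (by norm_num) (by rw [hv₀, hv₂, lamAdjLR.left_eq_of_coord_zero_eq h₁₁ h₂₁ h])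
  · exact hnb 2 (by norm_num) (by rw [hv₂, hv₄, lamAdjLR.left_eq_of_coord_zero_eq h₂₂ h₃₂ h])
  · exact hnb 1 (by norm_num) (by rw [hv₁, hv₃, lamAdjLR.right_eq_of_coord_zero_eq h₂₁ h₂₂ h])
  · exact hnb 3 (by norm_num) (by rw [hv₃, hv₅, lamAdjLR.right_eq_of_coord_zero_eq h₃₂ h₃₃ h])

end LambdaGraph

end

theorem lambda5_girth_ge_ten_general (F : Type*) [Field F] :
    10 ≤ (LambdaGraph F 5).egirth := by
  refine SimpleGraph.le_egirth.2 fun v c hc => ?_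
  obtain ⟨l, c', hc', hlen⟩ := LambdaGraph.exists_isCycle_inl hc
  obtain ⟨m, hm⟩ := LambdaGraph.even_length c'
  have h3 := hc'.three_le_length
  by_contra! hlt
  rw [← hlen] at hlt
  norm_cast at hlt
  obtain ⟨w, hw, hnb⟩ := hc'.exists_length_eight (by omega)
  exact LambdaGraph.false_of_walk_length_eight w hw hnb

/-- For every prime power `q ≥ 3`, the girth of `Λ(5,q)` is at least 10. -/
theorem lambda5_girth_ge_ten (q : ℕ) (hq : IsPrimePow q) (hq3 : 3 ≤ q)
    (F : Type*) [Field F] [Fintype F] (hF : Fintype.card F = q) :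
    10 ≤ (LambdaGraph F 5).egirth :=
  lambda5_girth_ge_ten_general F
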